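/- For every nonzero rational number α there exist a prime number p and an integer k ≥ 2 such that gcd(α.num, p) = 1 and α ∈ ℚ-KS(p^k). -/

import Mathlib

/-!
Write `α = a / b`, take a prime `p > |a|` and put `m = b p - a`. Since `p ∤ a`, `p` is coprime
to `m`, so `p ^ φ(|m|) ≡ 1 (mod m)` by Euler, and with `k = φ(|m|) + 1`
`b p ^ k - a = p ^ (k - 1) m + a (p ^ (k - 1) - 1) ≡ 0 (mod m)`.
-/

/-- `α` is an `N`-Korselt base: `α ≠ 0`, `α ≠ N`, and for every prime `p` dividing `N`,
`α.den * p - α.num` divides `α.den * N - α.num`. -/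
def QKS (N : ℕ) (α : ℚ) : Prop :=
  α ≠ 0 ∧ α ≠ (N : ℚ) ∧
    ∀ p : ℕ, p.Prime → p ∣ N →
      ((α.den : ℤ) * p - α.num) ∣ ((α.den : ℤ) * N - α.num)

open Nat

theorem Int.dvd_pow_totient_natAbs_sub_one {x m : ℤ} (h : IsCoprime x m) :
    m ∣ x ^ φ m.natAbs - 1 := by
  have hm : (m : ZMod m.natAbs) = 0 :=
    (ZMod.intCast_zmod_eq_zero_iff_dvd _ _).mpr (Int.natAbs_dvd.mpr dvd_rfl)
  have hx : IsUnit (x : ZMod m.natAbs) :=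
    isCoprime_zero_right.mp (by simpa [hm] using h.map (Int.castRingHom (ZMod m.natAbs)))
  rw [← Int.natAbs_dvd, ← ZMod.intCast_zmod_eq_zero_iff_dvd, Int.cast_sub, Int.cast_pow,
    Int.cast_one, sub_eq_zero, ← hx.unit_spec, ← Units.val_pow_eq_pow_val, ZMod.pow_totient,
    Units.val_one]

theorem sub_dvd_mul_pow_totient_succ_sub {a b q : ℤ} (h : IsCoprime q (a * q - b)) :
    a * q - b ∣ a * q ^ (φ (a * q - b).natAbs + 1) - b := by
  set m := a * q - b
  set k := φ m.natAbs
  have hEuler : m ∣ q ^ k - 1 := Int.dvd_pow_totient_natAbs_sub_one h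
  have hsplit : a * q ^ (k + 1) - b = q ^ k * m + b * (q ^ k - 1) := by ring
  rw [hsplit]
  exact dvd_add (dvd_mul_left m _) (hEuler.mul_left b)

theorem qks_prime_pow_iff {p k : ℕ} (hp : p.Prime) (hk : k ≠ 0) (α : ℚ) :
    QKS (p ^ k) α ↔ α ≠ 0 ∧ α ≠ ((p ^ k : ℕ) : ℚ) ∧
      (α.den : ℤ) * p - α.num ∣ (α.den : ℤ) * (p ^ k : ℕ) - α.num := by
  refine and_congr_right fun _ ↦ and_congr_right fun _ ↦ ⟨fun h ↦ h p hp (dvd_pow_self p hk), ?_⟩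
  intro h q hq hqp
  rwa [(prime_dvd_prime_iff_eq hq hp).mp (hq.dvd_of_dvd_pow hqp)]

theorem stmt_11 (α : ℚ) (hα : α ≠ 0) :
    ∃ p k : ℕ, p.Prime ∧ 2 ≤ k ∧ Int.gcd α.num (p : ℤ) = 1 ∧ QKS (p ^ k) α := by
  obtain ⟨p, hlt, hp⟩ := exists_infinite_primes (α.num.natAbs + 1)
  have hpa : ¬ (p : ℤ) ∣ α.num := fun h ↦ by
    have := Nat.le_of_dvd (Int.natAbs_pos.mpr (Rat.num_ne_zero.mpr hα)) (Int.natCast_dvd.mp h)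
    omega
  have hcop : IsCoprime (p : ℤ) α.num := (prime_iff_prime_int.mp hp).coprime_iff_not_dvd.mpr hpa
  have hcop' : IsCoprime (p : ℤ) (α.den * p - α.num) := IsCoprime.mul_sub_right_right_iff.mpr hcop
  have hm : α.den * (p : ℤ) - α.num ≠ 0 := fun h ↦
    (prime_iff_prime_int.mp hp).not_isUnit (isCoprime_zero_right.mp (h ▸ hcop'))
  refine ⟨p, φ (α.den * (p : ℤ) - α.num).natAbs + 1, hp, ?_,
    Int.isCoprime_iff_gcd_eq_one.mp hcop.symm, (qks_prime_pow_iff hp (succ_ne_zero _) α).mpr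
      ⟨hα, fun h ↦ hpa ?_, by push_cast; exact sub_dvd_mul_pow_totient_succ_sub hcop'⟩⟩
  · have := totient_pos.mpr (Int.natAbs_pos.mpr hm)
    omega
  · rw [h, Rat.num_natCast, Nat.cast_pow]
    exact dvd_pow_self _ (succ_ne_zero _)
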